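/- arXiv:1005.2321 — 4 statements merged into one kernel-verified Lean document; each statement's English description precedes it below -/
import Mathlib

section
/- Let (x_k) be a sequence in a Polish space E_X converging to x, and let W be a Markov kernel from E_X to a Polish space E_Y such that W(·|x_k) converges weakly to W(·|x) (weak* continuity). Then for any sequence of probability measures P_k on E_X converging weakly to P_X, the joint measures P_k ⊗ W converge weakly to P_X ⊗ W on E_X × E_Y. -/
/-!
By the portmanteau theorem it suffices to test weak convergence against bounded functions `f`
on `EX × EY` that are Lipschitz. For such `f`, `∫ f d(P ⊗ W) = ∫ g dP` with
`g x = ∫ f (x, y) dW(y|x)`, and `g` is bounded and continuous: along `x_k → x`, replacing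
`f (x_k, ·)` by `f (x, ·)` costs at most `L · d(x_k, x)`, and `∫ f (x, ·) dW(·|x_k)` converges
by weak continuity of `W`. Weak convergence `P_k ⇀ P_X` tested against `g` then gives the claim.
-/

open MeasureTheory ProbabilityTheory Filter Topology

def WeakTendsto {E : Type*} [MeasurableSpace E] [TopologicalSpace E]
    (μs : ℕ → Measure E) (μ : Measure E) : Prop :=
  ∀ f : BoundedContinuousFunction E ℝ,
    Tendsto (fun n => ∫ x, f x ∂(μs n)) atTop (𝓝 (∫ x, f x ∂μ))

open scoped NNReal BoundedContinuousFunction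

theorem WeakTendsto.of_forall_lipschitzWith {Ω : Type*} [MeasurableSpace Ω]
    [PseudoEMetricSpace Ω] [OpensMeasurableSpace Ω]
    {μs : ℕ → Measure Ω} [∀ n, IsProbabilityMeasure (μs n)]
    {μ : Measure Ω} [IsProbabilityMeasure μ]
    (h : ∀ (f : Ω →ᵇ ℝ) (L : ℝ≥0), LipschitzWith L f →
      Tendsto (fun n => ∫ x, f x ∂μs n) atTop (𝓝 (∫ x, f x ∂μ))) :
    WeakTendsto μs μ := by
  let νs : ℕ → ProbabilityMeasure Ω := fun n => ⟨μs n, inferInstance⟩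
  let ν : ProbabilityMeasure Ω := ⟨μ, inferInstance⟩
  have : Tendsto νs atTop (𝓝 ν) :=
    tendsto_iff_forall_lipschitz_integral_tendsto.2 fun f ⟨C, hC⟩ ⟨L, hL⟩ =>
      h (.mkOfBound ⟨f, hL.continuous⟩ C hC) L hL
  exact ProbabilityMeasure.tendsto_iff_forall_integral_tendsto.1 this

section

variable {EX EY : Type*} [PseudoMetricSpace EX] [PseudoMetricSpace EY]
  [MeasurableSpace EY] [OpensMeasurableSpace EY]

theorem BoundedContinuousFunction.integrable_comp_prodMk_left (f : EX × EY →ᵇ ℝ) (x : EX)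
    (ν : Measure EY) [IsFiniteMeasure ν] : Integrable (fun y => f (x, y)) ν :=
  (f.compContinuous ⟨_, Continuous.prodMk_right x⟩).integrable ν

theorem abs_integral_sub_integral_le_of_lipschitzWith (ν : Measure EY) [IsProbabilityMeasure ν]
    {f : EX × EY →ᵇ ℝ} {L : ℝ≥0} (hf : LipschitzWith L f) (x x' : EX) :
    |∫ y, f (x, y) ∂ν - ∫ y, f (x', y) ∂ν| ≤ L * dist x x' := by
  rw [← integral_sub (f.integrable_comp_prodMk_left x ν) (f.integrable_comp_prodMk_left x' ν)]
  have h_slice (y : EY) : ‖f (x, y) - f (x', y)‖ ≤ L * dist x x' := by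
    simpa [dist_prod_same_right, Real.dist_eq] using hf.dist_le_mul (x, y) (x', y)
  simpa using norm_integral_le_of_norm_le_const (μ := ν) (Eventually.of_forall h_slice)

variable [MeasurableSpace EX]

theorem continuous_integral_kernel_of_lipschitzWith (W : Kernel EX EY) [IsMarkovKernel W]
    (hW : ∀ (x : EX) (xk : ℕ → EX), Tendsto xk atTop (𝓝 x) →
      WeakTendsto (fun k => W (xk k)) (W x))
    {f : EX × EY →ᵇ ℝ} {L : ℝ≥0} (hf : LipschitzWith L f) :
    Continuous fun x => ∫ y, f (x, y) ∂W x := by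
  refine continuous_iff_seqContinuous.2 fun xk x hxk => ?_
  change Tendsto (fun k => ∫ y, f (xk k, y) ∂W (xk k)) atTop _
  have h_kernel : Tendsto (fun k => ∫ y, f (x, y) ∂W (xk k)) atTop (𝓝 (∫ y, f (x, y) ∂W x)) :=
    hW x xk hxk (f.compContinuous ⟨_, Continuous.prodMk_right x⟩)
  have h_point : Tendsto (fun k => ∫ y, f (xk k, y) ∂W (xk k) - ∫ y, f (x, y) ∂W (xk k))
      atTop (𝓝 0) := by
    refine squeeze_zero_norm (fun k => abs_integral_sub_integral_le_of_lipschitzWith _ hf _ _) ?_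
    simpa using (tendsto_iff_dist_tendsto_zero.1 hxk).const_mul (L : ℝ)
  simpa using h_point.add h_kernel

theorem tendsto_integral_compProd_of_lipschitzWith [OpensMeasurableSpace EX]
    [SecondCountableTopologyEither EX EY] (W : Kernel EX EY) [IsMarkovKernel W]
    (hW : ∀ (x : EX) (xk : ℕ → EX), Tendsto xk atTop (𝓝 x) →
      WeakTendsto (fun k => W (xk k)) (W x))
    {Pk : ℕ → Measure EX} [∀ k, IsFiniteMeasure (Pk k)] {PX : Measure EX} [IsFiniteMeasure PX]
    (hP : WeakTendsto Pk PX) {f : EX × EY →ᵇ ℝ} {L : ℝ≥0} (hf : LipschitzWith L f) :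
    Tendsto (fun k => ∫ z, f z ∂(Pk k ⊗ₘ W)) atTop (𝓝 (∫ z, f z ∂(PX ⊗ₘ W))) := by
  have h_bound (x : EX) : ‖∫ y, f (x, y) ∂W x‖ ≤ ‖f‖ := by
    simpa using norm_integral_le_of_norm_le_const (μ := W x)
      (Eventually.of_forall fun y => f.norm_coe_le_norm (x, y))
  let G : EX →ᵇ ℝ :=
    .ofNormedAddCommGroup _ (continuous_integral_kernel_of_lipschitzWith W hW hf) ‖f‖ h_bound
  simp_rw [Measure.integral_compProd (f.integrable _)]
  exact hP G

end

theorem compProd_weakTendsto_of_weakTendsto_general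
    {EX EY : Type*}
    [MetricSpace EX] [TopologicalSpace.SeparableSpace EX]
    [MeasurableSpace EX] [BorelSpace EX]
    [MetricSpace EY]
    [MeasurableSpace EY] [BorelSpace EY]
    (W : Kernel EX EY) [IsMarkovKernel W]
    (hW : ∀ (x : EX) (xk : ℕ → EX), Tendsto xk atTop (𝓝 x) →
      WeakTendsto (fun k => W (xk k)) (W x))
    (PX : Measure EX) [IsProbabilityMeasure PX]
    (Pk : ℕ → Measure EX) [∀ k, IsProbabilityMeasure (Pk k)]
    (hP : WeakTendsto Pk PX) :
    WeakTendsto (fun k => (Pk k) ⊗ₘ W) (PX ⊗ₘ W) := by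
  have : SecondCountableTopology EX := UniformSpace.secondCountable_of_separable EX
  exact WeakTendsto.of_forall_lipschitzWith fun _ _ hf =>
    tendsto_integral_compProd_of_lipschitzWith W hW hP hf

/-- Csiszár's Lemma 2: if `W` is a weak*-continuous Markov kernel from `E_X` to `E_Y`
(i.e. `W(·|x_k) ⇀ W(·|x)` whenever `x_k → x`), then weak convergence `P_k ⇀ P_X` of
probability measures on `E_X` implies weak convergence `P_k ⊗ W ⇀ P_X ⊗ W` of the joint
measures on `E_X × E_Y`. -/
theorem compProd_weakTendsto_of_weakTendsto
    {EX EY : Type*}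
    [MetricSpace EX] [TopologicalSpace.SeparableSpace EX] [CompleteSpace EX]
    [MeasurableSpace EX] [BorelSpace EX]
    [MetricSpace EY] [TopologicalSpace.SeparableSpace EY] [CompleteSpace EY]
    [MeasurableSpace EY] [BorelSpace EY]
    (W : Kernel EX EY) [IsMarkovKernel W]
    (hW : ∀ (x : EX) (xk : ℕ → EX), Tendsto xk atTop (𝓝 x) →
      WeakTendsto (fun k => W (xk k)) (W x))
    (PX : Measure EX) [IsProbabilityMeasure PX]
    (Pk : ℕ → Measure EX) [∀ k, IsProbabilityMeasure (Pk k)]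
    (hP : WeakTendsto Pk PX) :
    WeakTendsto (fun k => (Pk k) ⊗ₘ W) (PX ⊗ₘ W) :=
  compProd_weakTendsto_of_weakTendsto_general W hW PX Pk hP
end

section
/- Let X_1, X_2, … be i.i.d. random variables with values in a Polish space E and common law P. Then almost surely the sequence of empirical measures P_n = (1/n) Σ_{ℓ=1}^n δ_{X_ℓ} converges weakly to P (Varadarajan's theorem). -/
open MeasureTheory ProbabilityTheory Filter Topology
open scoped ENNReal

/-- The empirical measure of the first `n` letters of a sequence. -/
noncomputable def empMeasure {E : Type*} [MeasurableSpace E] (x : ℕ → E) (n : ℕ) :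
    Measure E :=
  (n : ℝ≥0∞)⁻¹ • ∑ i ∈ Finset.range n, Measure.dirac (x i)

/-!
By the strong law of large numbers applied to indicator functions, almost surely
`P_n(s) → P(s)` simultaneously for every `s` in a fixed countable family. Take this family to be
the finite intersections of a countable basis of `E`: a π-system of open sets containing a
neighbourhood basis at every point. Inclusion–exclusion then gives convergence on finite unions
of its members, these approximate every open set from inside, and the portmanteau theorem turns
`P(G) ≤ liminf P_n(G)` for open `G` into weak convergence.
-/

lemma measureReal_empMeasure {E : Type*} [MeasurableSpace E] (x : ℕ → E) (n : ℕ)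
    {A : Set E} (hA : MeasurableSet A) :
    (empMeasure x n).real A = (∑ i ∈ Finset.range n, A.indicator 1 (x i)) / n := by
  have hdirac (y : E) : Measure.dirac y A = ENNReal.ofReal (A.indicator 1 y) := by
    by_cases hy : y ∈ A <;> simp [Measure.dirac_apply' _ hA, hy]
  simp [empMeasure, measureReal_def, Measure.finsetSum_apply, hdirac, div_eq_inv_mul,
    ← ENNReal.ofReal_sum_of_nonneg, Set.indicator_nonneg, Finset.sum_nonneg]

lemma isProbabilityMeasure_empMeasure {E : Type*} [MeasurableSpace E] (x : ℕ → E) {n : ℕ}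
    (hn : n ≠ 0) : IsProbabilityMeasure (empMeasure x n) := by
  constructor
  simp [empMeasure, Measure.finsetSum_apply, ENNReal.inv_mul_cancel, hn]

open Set TopologicalSpace in
lemma exists_countable_isPiSystem_isOpen_basis
    (E : Type*) [TopologicalSpace E] [SecondCountableTopology E] :
    ∃ S : Set (Set E), S.Countable ∧ IsPiSystem S ∧ (∀ s ∈ S, IsOpen s) ∧
      ∀ u, IsOpen u → ∀ x ∈ u, ∃ s ∈ S, s ∈ 𝓝 x ∧ s ⊆ u := by
  refine ⟨(fun f ↦ ⋂₀ f) '' {f | f.Finite ∧ f ⊆ countableBasis E},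
    (countable_ofPred_finite_subset (countable_countableBasis E)).image _, ?_, ?_, ?_⟩
  · rintro _ ⟨f, ⟨hf, hfb⟩, rfl⟩ _ ⟨g, ⟨hg, hgb⟩, rfl⟩ -
    exact ⟨f ∪ g, ⟨hf.union hg, union_subset hfb hgb⟩, sInter_union f g⟩
  · rintro _ ⟨f, ⟨hf, hfb⟩, rfl⟩
    exact hf.isOpen_sInter fun s hs ↦ isOpen_of_mem_countableBasis (hfb hs)
  · intro u hu x hx
    obtain ⟨v, hv, hxv, hvu⟩ := (isBasis_countableBasis E).exists_subset_of_mem_open hx hu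
    exact ⟨v, ⟨{v}, ⟨finite_singleton v, singleton_subset_iff.2 hv⟩, sInter_singleton v⟩,
      (isOpen_of_mem_countableBasis hv).mem_nhds hxv, hvu⟩

lemma weakTendsto_of_isPiSystem_of_tendsto_measureReal {E : Type*} [TopologicalSpace E]
    [SecondCountableTopology E] [MeasurableSpace E] [OpensMeasurableSpace E] {S : Set (Set E)} (hS : IsPiSystem S)
    (hopen : ∀ s ∈ S, IsOpen s) (hnhds : ∀ u, IsOpen u → ∀ x ∈ u, ∃ s ∈ S, s ∈ 𝓝 x ∧ s ⊆ u)
    {μs : ℕ → Measure E} [∀ n, IsProbabilityMeasure (μs n)] {P : Measure E}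
    [IsProbabilityMeasure P]
    (h : ∀ s ∈ S, Tendsto (fun n ↦ (μs n).real s) atTop (𝓝 (P.real s))) :
    WeakTendsto μs P := by
  let ν : ℕ → ProbabilityMeasure E := fun n ↦ ⟨μs n, inferInstance⟩
  have : Tendsto ν atTop (𝓝 ⟨P, inferInstance⟩) :=
    hS.tendsto_probabilityMeasure_of_tendsto_of_mem (fun s hs ↦ (hopen s hs).measurableSet)
      hnhds fun s hs ↦ NNReal.tendsto_coe.1 (h s hs)
  exact ProbabilityMeasure.tendsto_iff_forall_integral_tendsto.1 this

lemma ae_tendsto_measureReal_empMeasure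
    {E : Type*} [MeasurableSpace E]
    {Ω : Type*} [MeasurableSpace Ω] {μ : Measure Ω} [IsFiniteMeasure μ]
    {P : Measure E} [NeZero P] {X : ℕ → Ω → E}
    (hindep : iIndepFun X μ) (hlaw : ∀ i, μ.map (X i) = P) {A : Set E} (hA : MeasurableSet A) :
    ∀ᵐ ω ∂μ, Tendsto (fun n ↦ (empMeasure (X · ω) n).real A) atTop (𝓝 (P.real A)) := by
  have hX i : AEMeasurable (X i) μ := .of_map_ne_zero (by simp [hlaw, NeZero.ne])
  have hg : Measurable (A.indicator (1 : E → ℝ)) := measurable_const.indicator hA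
  let Y : ℕ → Ω → ℝ := fun i ↦ A.indicator 1 ∘ X i
  have hint : Integrable (Y 0) μ :=
    (integrable_const (1 : ℝ)).mono' (hg.comp_aemeasurable (hX 0)).aestronglyMeasurable
      (.of_forall fun ω ↦ (norm_indicator_le_norm_self _ _).trans_eq norm_one)
  have hident i : IdentDistrib (Y i) (Y 0) μ μ :=
    IdentDistrib.comp ⟨hX i, hX 0, by rw [hlaw, hlaw]⟩ hg
  have hmean : μ[Y 0] = P.real A := by
    change ∫ ω, A.indicator 1 (X 0 ω) ∂μ = _
    rw [← integral_map (hX 0) hg.aestronglyMeasurable, hlaw, integral_indicator_one hA]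
  filter_upwards [strong_law_ae_real Y hint (fun i j hij ↦ (hindep.indepFun hij).comp hg hg)
    hident] with ω hω
  rw [hmean] at hω
  simpa [measureReal_empMeasure _ _ hA, Y] using hω

theorem varadarajan_general
    {E : Type*} [MetricSpace E] [TopologicalSpace.SeparableSpace E]
    [MeasurableSpace E] [BorelSpace E]
    {Ω : Type*} [MeasurableSpace Ω] (μ : Measure Ω) [IsProbabilityMeasure μ]
    (P : Measure E) [IsProbabilityMeasure P]
    (X : ℕ → Ω → E)
    (hindep : iIndepFun X μ)
    (hlaw : ∀ i, μ.map (X i) = P) :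
    ∀ᵐ ω ∂μ, WeakTendsto (fun n => empMeasure (fun i => X i ω) n) P := by
  obtain ⟨S, hS_count, hS, hS_open, hS_nhds⟩ := exists_countable_isPiSystem_isOpen_basis E
  have hae : ∀ᵐ ω ∂μ, ∀ s ∈ S,
      Tendsto (fun n ↦ (empMeasure (X · ω) n).real s) atTop (𝓝 (P.real s)) :=
    (ae_ball_iff hS_count).2 fun s hs ↦
      ae_tendsto_measureReal_empMeasure hindep hlaw (hS_open s hs).measurableSet
  filter_upwards [hae] with ω hω f
  -- `empMeasure x 0 = 0` is not a probability measure, so we pass to the shifted sequence.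
  have _ (n : ℕ) : IsProbabilityMeasure (empMeasure (X · ω) (n + 1)) :=
    isProbabilityMeasure_empMeasure _ n.succ_ne_zero
  refine (tendsto_add_atTop_iff_nat 1).1 ?_
  exact weakTendsto_of_isPiSystem_of_tendsto_measureReal hS hS_open hS_nhds
    (fun s hs ↦ (hω s hs).comp (tendsto_add_atTop_nat 1)) f

/-- Varadarajan's theorem: the empirical measures of an i.i.d. sequence with law `P` on a
Polish space almost surely converge weakly to `P`. -/
theorem varadarajan
    {E : Type*} [MetricSpace E] [TopologicalSpace.SeparableSpace E] [CompleteSpace E]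
    [MeasurableSpace E] [BorelSpace E]
    {Ω : Type*} [MeasurableSpace Ω] (μ : Measure Ω) [IsProbabilityMeasure μ]
    (P : Measure E) [IsProbabilityMeasure P]
    (X : ℕ → Ω → E) (hmeas : ∀ i, Measurable (X i))
    (hindep : iIndepFun X μ)
    (hlaw : ∀ i, μ.map (X i) = P) :
    ∀ᵐ ω ∂μ, WeakTendsto (fun n => empMeasure (fun i => X i ω) n) P :=
  varadarajan_general μ P X hindep hlaw
end

section
/- Let P and M be probability measures on a measurable space (E, ℰ), and let ℱ be a field of sets generating ℰ. Then the Kullback–Leibler divergence satisfies D(P‖M) = sup over finite partitions 𝒬 ⊆ ℱ of Σ_i P(Q_i) log(P(Q_i)/M(Q_i)); i.e., partitions drawn from the generating field suffice to achieve the supremum over all finite measurable partitions. -/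
open MeasureTheory Set

/-- The relative entropy of `P` with respect to `M` computed on a finite partition `Q`,
with the conventions `0 · log (0/q) = 0` and `p · log (p/0) = ∞` for `p > 0`. -/
noncomputable def partRelEntropy {E : Type*} [MeasurableSpace E] (P M : Measure E)
    (Q : Finset (Set E)) : EReal :=
  ∑ A ∈ Q,
    if P A = 0 then (0 : EReal)
    else if M A = 0 then (⊤ : EReal)
    else (((P A).toReal * Real.log ((P A).toReal / (M A).toReal) : ℝ) : EReal)

/-- A finite partition of the space into (not necessarily measurable) pieces. -/
def IsPartition {E : Type*} (Q : Finset (Set E)) : Prop :=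
  ((Q : Set (Set E)).PairwiseDisjoint id) ∧ ⋃₀ (Q : Set (Set E)) = Set.univ

/-!
The summand `p log (p / q)` of the partition entropy, with its conventions at `p = 0` and
`q = 0`, is a lower semicontinuous function of `(p, q)`: it is the supremum over `η > 0` of the
continuous functions `p log p - p log (q + η)`. Given a measurable partition `A₁, …, Aₘ`,
approximate each `Aᵢ` in `(P + M)`-measure by a set `Bᵢ` of the field. Making the `Bᵢ` disjoint
and adding the complement of their union yields a partition drawn from the field whose cell
probabilities under `P` and `M` are close to those of `A₁, …, Aₘ, ∅`. Lower semicontinuity then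
bounds the entropy of `A` by the supremum over partitions drawn from the field.
-/

open Filter Function Topology Real
open scoped ENNReal NNReal symmDiff

lemma EReal.lowerSemicontinuous_sum {ι α : Type*} [TopologicalSpace α] {f : ι → α → EReal}
    {s : Finset ι} (hf : ∀ i ∈ s, LowerSemicontinuous (f i)) (hbot : ∀ i ∈ s, ∀ x, f i x ≠ ⊥) :
    LowerSemicontinuous fun x ↦ ∑ i ∈ s, f i x := by
  classical
  induction s using Finset.induction_on with
  | empty => exact lowerSemicontinuous_const
  | insert i s hi ih =>
    simp only [Finset.sum_insert hi]
    have hsum : ∀ x, ∑ j ∈ s, f j x ≠ ⊥ := fun x ↦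
      Finset.sum_induction _ (· ≠ ⊥) (fun _ _ ha hb ↦ EReal.add_ne_bot_iff.2 ⟨ha, hb⟩)
        EReal.zero_ne_bot fun j hj ↦ hbot j (Finset.mem_insert_of_mem hj) x
    exact (hf i (s.mem_insert_self i)).add' (ih (fun j hj ↦ hf j (Finset.mem_insert_of_mem hj))
      fun j hj ↦ hbot j (Finset.mem_insert_of_mem hj))
      fun x ↦ EReal.continuousAt_add (.inr (hsum x)) (.inl (hbot i (s.mem_insert_self i) x))

lemma LowerSemicontinuousAt.le_of_tendsto {α β γ : Type*} [TopologicalSpace α] [LinearOrder γ]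
    {f : α → γ} {x : α} (hf : LowerSemicontinuousAt f x) {u : β → α} {l : Filter β} [l.NeBot]
    (hu : Tendsto u l (𝓝 x)) {c : γ} (hc : ∀ᶠ n in l, f (u n) ≤ c) : f x ≤ c :=
  le_of_forall_lt fun y hy ↦
    let ⟨_, hyn, hnc⟩ := ((hu.eventually (hf y hy)).and hc).exists
    hyn.trans_le hnc

section relEntropyTerm

noncomputable def relEntropyTerm (p q : ℝ≥0) : EReal :=
  if p = 0 then 0 else if q = 0 then ⊤ else Real.toEReal (p * log (p / q))

@[simp]
lemma relEntropyTerm_zero_left (q : ℝ≥0) : relEntropyTerm 0 q = 0 := if_pos rfl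

lemma relEntropyTerm_ne_bot (p q : ℝ≥0) : relEntropyTerm p q ≠ ⊥ := by
  unfold relEntropyTerm
  split_ifs
  exacts [EReal.zero_ne_bot, top_ne_bot, EReal.coe_ne_bot _]

lemma le_relEntropyTerm {η : ℝ} (hη : 0 < η) (p q : ℝ≥0) :
    ((p * log p - p * log (q + η) : ℝ) : EReal) ≤ relEntropyTerm p q := by
  unfold relEntropyTerm
  split_ifs with hp hq
  · simp [hp]
  · exact le_top
  · rw [EReal.coe_le_coe_iff, log_div (by positivity) (by positivity), mul_sub]
    gcongr
    exact le_add_of_nonneg_right hη.le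

lemma tendsto_relEntropyTerm (p q : ℝ≥0) :
    Tendsto (fun η : ℝ ↦ ((p * log p - p * log (q + η) : ℝ) : EReal)) (𝓝[>] 0)
      (𝓝 (relEntropyTerm p q)) := by
  rcases eq_or_ne p 0 with rfl | hp
  · simp
  have hp' : (0 : ℝ) < p := by positivity
  rcases eq_or_ne q 0 with rfl | hq
  · simp only [relEntropyTerm, hp, if_false, if_true, NNReal.coe_zero, zero_add,
      EReal.tendsto_coe_nhds_top_iff, sub_eq_add_neg]
    exact tendsto_atTop_add_const_left _ _
      (tendsto_neg_atBot_atTop.comp (tendsto_log_nhdsGT_zero.const_mul_atBot hp'))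
  · have hcont : ContinuousAt (fun η : ℝ ↦ (p * log p - p * log (q + η) : ℝ)) 0 :=
      continuousAt_const.sub (continuousAt_const.mul
        ((continuousAt_const.add continuousAt_id).log (by simpa using hq)))
    have hval : relEntropyTerm p q = ((p * log p - p * log (q + 0) : ℝ) : EReal) := by
      rw [relEntropyTerm, if_neg hp, if_neg hq, add_zero, log_div (by positivity) (by positivity),
        mul_sub]
    rw [hval]
    exact EReal.tendsto_coe.2 (hcont.tendsto.mono_left nhdsWithin_le_nhds)

lemma lowerSemicontinuous_relEntropyTerm :
    LowerSemicontinuous fun x : ℝ≥0 × ℝ≥0 ↦ relEntropyTerm x.1 x.2 := by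
  rintro ⟨p, q⟩ y hy
  obtain ⟨η, hyη, hη⟩ :=
    (((tendsto_relEntropyTerm p q).eventually (lt_mem_nhds hy)).and self_mem_nhdsWithin).exists
  have hcont : Continuous fun x : ℝ≥0 × ℝ≥0 ↦ ((x.1 * log x.1 - x.1 * log (x.2 + η) : ℝ) : EReal) :=
    continuous_coe_real_ereal.comp <|
      (continuous_mul_log.comp (NNReal.continuous_coe.comp continuous_fst)).sub <|
        (NNReal.continuous_coe.comp continuous_fst).mul <|
          ((NNReal.continuous_coe.comp continuous_snd).add continuous_const).log
            fun x ↦ (add_pos_of_nonneg_of_pos x.2.2 hη).ne'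
  filter_upwards [hcont.continuousAt.eventually (lt_mem_nhds hyη)] with x hx
  exact hx.trans_le (le_relEntropyTerm hη x.1 x.2)

lemma lowerSemicontinuous_sum_relEntropyTerm (κ : Type*) [Fintype κ] :
    LowerSemicontinuous fun v : κ → ℝ≥0 × ℝ≥0 ↦ ∑ k, relEntropyTerm (v k).1 (v k).2 :=
  EReal.lowerSemicontinuous_sum
    (fun k _ ↦ lowerSemicontinuous_relEntropyTerm.comp (continuous_apply k))
    fun _ _ _ ↦ relEntropyTerm_ne_bot _ _

end relEntropyTerm

section disjointedCover

variable {E ι : Type*} [LinearOrder ι] [LocallyFiniteOrderBot ι]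

def disjointedCover (B : ι → Set E) : Option ι → Set E
  | none => (⋃ i, B i)ᶜ
  | some i => disjointed B i

lemma pairwise_disjoint_disjointedCover (B : ι → Set E) :
    Pairwise (Disjoint on disjointedCover B) := by
  have hrest : ∀ i, Disjoint (disjointedCover B none) (disjointedCover B (some i)) := fun i ↦
    disjoint_compl_left.mono_right ((disjointed_subset B i).trans (subset_iUnion B i))
  rintro (_ | i) (_ | j) hij
  · exact absurd rfl hij
  · exact hrest j
  · exact (hrest i).symm
  · exact disjoint_disjointed B fun h ↦ hij (congrArg some h)

lemma iUnion_disjointedCover (B : ι → Set E) : ⋃ o, disjointedCover B o = univ := by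
  rw [iUnion_option]
  simp only [disjointedCover, iUnion_disjointed, compl_union_self]

lemma disjointedCover_symmDiff_subset (B A : ι → Set E) (o : Option ι) :
    disjointedCover B o ∆ disjointedCover A o ⊆ ⋃ i, B i ∆ A i := by
  intro x hx
  by_contra hx'
  simp only [mem_iUnion, mem_symmDiff, not_exists, not_or, not_and, not_not] at hx'
  have hBA : ∀ i, x ∈ B i ↔ x ∈ A i := fun i ↦ ⟨(hx' i).1, (hx' i).2⟩
  have h : x ∈ disjointedCover B o ↔ x ∈ disjointedCover A o := by
    cases o <;> simp [disjointedCover, disjointed_eq_inter_compl, hBA]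
  exact hx.elim (fun h1 ↦ h1.2 (h.1 h1.1)) fun h2 ↦ h2.2 (h.2 h2.1)

lemma disjointedCover_none_of_iUnion_eq_univ {A : ι → Set E} (h : ⋃ i, A i = univ) :
    disjointedCover A none = ∅ := by
  simp [disjointedCover, h]

lemma disjointedCover_some_of_pairwise_disjoint {A : ι → Set E} (h : Pairwise (Disjoint on A))
    (i : ι) : disjointedCover A (some i) = A i :=
  disjointed_eq_self fun _ hj ↦ h hj.ne

lemma MeasureTheory.IsSetAlgebra.disjointedCover_mem [Fintype ι] {F : Set (Set E)}
    (hF : IsSetAlgebra F) {B : ι → Set E} (hB : ∀ i, B i ∈ F) : ∀ o, disjointedCover B o ∈ F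
  | none => hF.compl_mem (by simpa using hF.biUnion_mem Finset.univ fun i _ ↦ hB i)
  | some i => disjointedRec (fun _ j ht ↦ hF.sdiff_mem ht (hB j)) (hB i)

lemma MeasurableSet.disjointedCover [MeasurableSpace E] [Countable ι] {A : ι → Set E}
    (hA : ∀ i, MeasurableSet (A i)) : ∀ o, MeasurableSet (disjointedCover A o)
  | none => (MeasurableSet.iUnion hA).compl
  | some i => disjointedRec (fun _ j ht ↦ ht.diff (hA j)) (hA i)

end disjointedCover

section Approximation

variable {E : Type*} [MeasurableSpace E]

lemma measurableSet_of_mem_of_generateFrom_eq {F : Set (Set E)}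
    (hgen : MeasurableSpace.generateFrom F = ‹MeasurableSpace E›) {s : Set E} (hs : s ∈ F) :
    MeasurableSet s :=
  hgen ▸ MeasurableSpace.measurableSet_generateFrom hs

lemma exists_seq_mem_tendsto_measure_symmDiff {F : Set (Set E)} (hF : IsSetAlgebra F)
    (hgen : MeasurableSpace.generateFrom F = ‹MeasurableSpace E›) (μ : Measure E)
    [IsFiniteMeasure μ] {s : Set E} (hs : MeasurableSet s) :
    ∃ t : ℕ → Set E, (∀ n, t n ∈ F) ∧ Tendsto (fun n ↦ μ (t n ∆ s)) atTop (𝓝 0) := by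
  have hcover : ∃ D : Set (Set E), D.Countable ∧ D ⊆ F ∧ μ (⋃₀ D)ᶜ = 0 :=
    ⟨{univ}, countable_singleton _, singleton_subset_iff.2 hF.univ_mem, by simp⟩
  choose t htF ht using fun n : ℕ ↦ exists_measure_symmDiff_lt_of_generateFrom_isSetRing
    hF.isSetRing hcover hgen.symm hs (ENNReal.inv_pos.2 (ENNReal.natCast_ne_top n))
  exact ⟨t, htF, tendsto_of_tendsto_of_tendsto_of_le_of_le tendsto_const_nhds
    ENNReal.tendsto_inv_nat_nhds_zero (fun _ ↦ zero_le) fun n ↦ (ht n).le⟩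

lemma tendsto_measure_of_tendsto_measure_symmDiff {β : Type*} {l : Filter β} {μ : Measure E}
    {s : β → Set E} {t : Set E} (hs : ∀ n, MeasurableSet (s n)) (ht : MeasurableSet t)
    (h : Tendsto (fun n ↦ μ (s n ∆ t)) l (𝓝 0)) : Tendsto (fun n ↦ μ (s n)) l (𝓝 (μ t)) := by
  have hconv : Tendsto (β := MeasuredSets μ) (fun n ↦ ⟨s n, hs n⟩) l (𝓝 ⟨t, ht⟩) :=
    tendsto_iff_edist_tendsto_0.2 h
  exact (MeasuredSets.continuous_measure.tendsto _).comp hconv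

lemma tendsto_measure_disjointedCover {ι : Type*} [LinearOrder ι] [LocallyFiniteOrderBot ι]
    [Fintype ι] {μ ν : Measure E} [IsFiniteMeasure ν] (hνμ : ν ≤ μ) {B : ℕ → ι → Set E}
    {A : ι → Set E} (hB : ∀ n i, MeasurableSet (B n i)) (hA : ∀ i, MeasurableSet (A i))
    (h : ∀ i, Tendsto (fun n ↦ μ (B n i ∆ A i)) atTop (𝓝 0)) (o : Option ι) :
    Tendsto (fun n ↦ (ν (disjointedCover (B n) o)).toNNReal) atTop
      (𝓝 (ν (disjointedCover A o)).toNNReal) := by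
  refine (ENNReal.tendsto_toNNReal (measure_ne_top _ _)).comp <|
    tendsto_measure_of_tendsto_measure_symmDiff
      (fun n ↦ MeasurableSet.disjointedCover (hB n) o) (MeasurableSet.disjointedCover hA o) ?_
  have hsum : Tendsto (fun n ↦ ∑ i, μ (B n i ∆ A i)) atTop (𝓝 0) := by
    simpa using tendsto_finsetSum Finset.univ fun i _ ↦ h i
  refine tendsto_of_tendsto_of_tendsto_of_le_of_le tendsto_const_nhds hsum (fun _ ↦ zero_le)
    fun n ↦ (hνμ _).trans ?_
  exact (measure_mono (disjointedCover_symmDiff_subset _ _ o)).trans (measure_iUnion_fintype_le _ _)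

end Approximation

section Partition

variable {E : Type*}

lemma Finset.exists_fin_injective_image_eq {α : Type*} [DecidableEq α] (s : Finset α) :
    ∃ (m : ℕ) (f : Fin m → α), Injective f ∧ Finset.univ.image f = s := by
  refine ⟨s.card, fun i ↦ s.equivFin.symm i,
    Subtype.val_injective.comp s.equivFin.symm.injective, ?_⟩
  ext x
  refine ⟨fun hx ↦ ?_, fun hx ↦ Finset.mem_image.2 ⟨s.equivFin ⟨x, hx⟩, Finset.mem_univ _, by simp⟩⟩
  obtain ⟨i, -, rfl⟩ := Finset.mem_image.1 hx
  exact (s.equivFin.symm i).2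

lemma isPartition_image {ι : Type*} [Fintype ι] [DecidableEq (Set E)] {C : ι → Set E}
    (hd : Pairwise (Disjoint on C)) (hc : ⋃ i, C i = univ) : IsPartition (Finset.univ.image C) := by
  refine ⟨?_, by simpa using hc⟩
  simp only [Finset.coe_image, Finset.coe_univ, image_univ]
  rintro _ ⟨i, rfl⟩ _ ⟨j, rfl⟩ hij
  exact hd fun h ↦ hij (congrArg C h)

lemma IsPartition.pairwise_disjoint {ι : Type*} [Fintype ι] [DecidableEq (Set E)] {C : ι → Set E}
    (hC : Injective C) (h : IsPartition (Finset.univ.image C)) : Pairwise (Disjoint on C) :=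
  fun i j hij ↦ h.1 (by simp) (by simp) (hC.ne hij)

lemma IsPartition.iUnion_eq_univ {ι : Type*} [Fintype ι] [DecidableEq (Set E)] {C : ι → Set E}
    (h : IsPartition (Finset.univ.image C)) : ⋃ i, C i = univ := by
  simpa using h.2

variable [MeasurableSpace E] (P M : Measure E) [IsFiniteMeasure P] [IsFiniteMeasure M]

lemma partRelEntropy_eq_sum_relEntropyTerm (Q : Finset (Set E)) :
    partRelEntropy P M Q = ∑ A ∈ Q, relEntropyTerm (P A).toNNReal (M A).toNNReal := by
  refine Finset.sum_congr rfl fun A _ ↦ ?_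
  simp [relEntropyTerm, ENNReal.toNNReal_eq_zero_iff, ENNReal.coe_toNNReal_eq_toReal]

lemma partRelEntropy_image {ι : Type*} [Fintype ι] [DecidableEq (Set E)] {C : ι → Set E}
    (hC : Pairwise (Disjoint on C)) :
    partRelEntropy P M (Finset.univ.image C) =
      ∑ i, relEntropyTerm (P (C i)).toNNReal (M (C i)).toNNReal := by
  rw [partRelEntropy_eq_sum_relEntropyTerm,
    Finset.sum_image_of_disjoint (by simp) (hC.set_pairwise _)]

theorem partRelEntropy_le_iSup_of_isSetAlgebra {F : Set (Set E)} (hF : IsSetAlgebra F)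
    (hgen : MeasurableSpace.generateFrom F = ‹MeasurableSpace E›)
    {Q : Finset (Set E)} (hQ : IsPartition Q) (hQm : ∀ A ∈ Q, MeasurableSet A) :
    partRelEntropy P M Q ≤
      ⨆ (Q' : Finset (Set E)) (_ : IsPartition Q' ∧ ↑Q' ⊆ F), partRelEntropy P M Q' := by
  classical
  obtain ⟨m, A, hAinj, rfl⟩ := Q.exists_fin_injective_image_eq
  have hAdisj := hQ.pairwise_disjoint hAinj
  have hAm : ∀ i, MeasurableSet (A i) := fun i ↦
    hQm _ (Finset.mem_image_of_mem _ (Finset.mem_univ i))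
  choose B hBF hB using fun i ↦ exists_seq_mem_tendsto_measure_symmDiff hF hgen (P + M) (hAm i)
  have hBm : ∀ n i, MeasurableSet (B i n) := fun n i ↦
    measurableSet_of_mem_of_generateFrom_eq hgen (hBF i n)
  have hlim : Tendsto (fun n o ↦ ((P (disjointedCover (B · n) o)).toNNReal,
      (M (disjointedCover (B · n) o)).toNNReal)) atTop
      (𝓝 fun o ↦ ((P (disjointedCover A o)).toNNReal, (M (disjointedCover A o)).toNNReal)) :=
    tendsto_pi_nhds.2 fun o ↦
      (tendsto_measure_disjointedCover (Measure.le_add_right le_rfl) hBm hAm hB o).prodMk_nhds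
        (tendsto_measure_disjointedCover (Measure.le_add_left le_rfl) hBm hAm hB o)
  have hentropy : partRelEntropy P M (Finset.univ.image A) = ∑ o,
      relEntropyTerm (P (disjointedCover A o)).toNNReal (M (disjointedCover A o)).toNNReal := by
    simp [partRelEntropy_image P M hAdisj, Fintype.sum_option,
      disjointedCover_none_of_iUnion_eq_univ hQ.iUnion_eq_univ,
      disjointedCover_some_of_pairwise_disjoint hAdisj]
  rw [hentropy]
  refine LowerSemicontinuousAt.le_of_tendsto (lowerSemicontinuous_sum_relEntropyTerm _ _) hlim
    (Eventually.of_forall fun n ↦ ?_)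
  rw [← partRelEntropy_image P M (pairwise_disjoint_disjointedCover _)]
  refine le_iSup₂_of_le (f := fun Q' (_ : IsPartition Q' ∧ ↑Q' ⊆ F) ↦ partRelEntropy P M Q') _
    ⟨isPartition_image (pairwise_disjoint_disjointedCover (B · n))
      (iUnion_disjointedCover (B · n)), ?_⟩ le_rfl
  simpa [Set.range_subset_iff] using hF.disjointedCover_mem fun i ↦ hBF i n

end Partition

/-- Gray's Lemma 5.2.2: the KL divergence, defined as the supremum of partition relative
entropies over all finite measurable partitions, is already attained as the supremum over
finite partitions drawn from any field `ℱ` generating the σ-algebra. -/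
theorem divergence_eq_sup_over_generating_field
    {E : Type*} [MeasurableSpace E]
    (P M : Measure E) [IsProbabilityMeasure P] [IsProbabilityMeasure M]
    (F : Set (Set E))
    (huniv : univ ∈ F)
    (hcompl : ∀ A ∈ F, Aᶜ ∈ F)
    (hunion : ∀ A ∈ F, ∀ B ∈ F, A ∪ B ∈ F)
    (hgen : MeasurableSpace.generateFrom F = (inferInstance : MeasurableSpace E)) :
    (⨆ (Q : Finset (Set E)) (_ : IsPartition Q ∧ ∀ A ∈ Q, MeasurableSet A),
        partRelEntropy P M Q) =
    (⨆ (Q : Finset (Set E)) (_ : IsPartition Q ∧ ↑Q ⊆ F),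
        partRelEntropy P M Q) := by
  have hF : IsSetAlgebra F :=
    ⟨compl_univ ▸ hcompl _ huniv, hcompl, fun s t hs ht ↦ hunion s hs t ht⟩
  refine le_antisymm (iSup₂_le fun Q hQ ↦ ?_) (iSup₂_le fun Q hQ ↦ ?_)
  · exact partRelEntropy_le_iSup_of_isSetAlgebra P M hF hgen hQ.1 hQ.2
  · exact le_iSup₂_of_le (f := fun Q (_ : IsPartition Q ∧ ∀ A ∈ Q, MeasurableSet A) ↦
      partRelEntropy P M Q) Q
      ⟨hQ.1, fun A hA ↦ measurableSet_of_mem_of_generateFrom_eq hgen (hQ.2 hA)⟩ le_rfl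
end

section
/- Let f_X be the density of a centered Gaussian N(0, σ²_X) on ℝ, K(L) = ∫_{−L}^{L} f_X(x) dx, and f_{X_L}(x) = f_X(x)·1{|x| ≤ L}/K(L) the truncated Gaussian density. Let f_Z be the density of N(0, σ²_Z) and define g_{Y_L}(y) = ∫_{−L}^{L} f_Z(y − x) f_X(x) dx and f_Y(y) = ∫_ℝ f_Z(y − x) f_X(x) dx. Then as L → ∞: K(L) → 1, g_{Y_L} increases pointwise to f_Y, and ∫_ℝ g_{Y_L}(y) log g_{Y_L}(y) dy → ∫_ℝ f_Y(y) log f_Y(y) dy. -/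
/-!
The Gaussian convolution `∫ f_Z(y - x) f_X(x) dx` is the `N(0, σ²_X + σ²_Z)` density (complete
the square in `x`), whose entropy integrand `f |log f|` is integrable since `log f` is quadratic.
The truncated convolutions `g_L` satisfy `0 ≤ g_L ≤ f_Y` and `g_L → f_Y` pointwise, and
`|t log t| ≤ s |log s| + s` for `0 ≤ t ≤ s`, so dominated convergence gives the entropy limit.
-/

open MeasureTheory Filter Topology

/-- The centered Gaussian density with variance `v`. -/
noncomputable def gaussPdf (v x : ℝ) : ℝ :=
  (Real.sqrt (2 * Real.pi * v))⁻¹ * Real.exp (-(x ^ 2) / (2 * v))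

open Real ProbabilityTheory Set

lemma abs_mul_log_le_of_le {t s : ℝ} (ht : 0 ≤ t) (hts : t ≤ s) :
    |t * log t| ≤ s * |log s| + s := by
  rcases ht.eq_or_lt with rfl | ht
  · simp only [zero_mul, abs_zero]
    positivity
  have hs : 0 < s := ht.trans_le hts
  have hsplit : t * log t = t * log s + s * (log (t / s) * (t / s)) := by
    rw [log_div ht.ne' hs.ne']
    field_simp
    ring
  have hu : |log (t / s) * (t / s)| ≤ 1 :=
    (abs_log_mul_self_lt _ (div_pos ht hs) ((div_le_one hs).mpr hts)).le
  calc |t * log t| ≤ |t * log s| + |s * (log (t / s) * (t / s))| := hsplit ▸ abs_add_le _ _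
    _ = t * |log s| + s * |log (t / s) * (t / s)| := by
        rw [abs_mul, abs_mul, abs_of_pos ht, abs_of_pos hs]
    _ ≤ s * |log s| + s * 1 := by gcongr
    _ = s * |log s| + s := by ring

theorem tendsto_integral_mul_log_of_le {α ι : Type*} [MeasurableSpace α] {μ : Measure α}
    {l : Filter ι} [l.IsCountablyGenerated] {F : ι → α → ℝ} {f : α → ℝ}
    (hF_meas : ∀ᶠ i in l, AEStronglyMeasurable (F i) μ)
    (hF_nonneg : ∀ᶠ i in l, ∀ᵐ a ∂μ, 0 ≤ F i a) (hF_le : ∀ᶠ i in l, ∀ᵐ a ∂μ, F i a ≤ f a)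
    (hf : Integrable f μ) (hf_log : Integrable (fun a => f a * |log (f a)|) μ)
    (h_lim : ∀ᵐ a ∂μ, Tendsto (fun i => F i a) l (𝓝 (f a))) :
    Tendsto (fun i => ∫ a, F i a * log (F i a) ∂μ) l (𝓝 (∫ a, f a * log (f a) ∂μ)) := by
  refine tendsto_integral_filter_of_dominated_convergence (fun a => f a * |log (f a)| + f a)
    ?_ ?_ (hf_log.add hf) ?_
  · filter_upwards [hF_meas] with i hi
    exact continuous_mul_log.comp_aestronglyMeasurable hi
  · filter_upwards [hF_nonneg, hF_le] with i h0 hle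
    filter_upwards [h0, hle] with a h0a hlea
    exact abs_mul_log_le_of_le h0a hlea
  · filter_upwards [h_lim] with a ha
    exact (continuous_mul_log.tendsto (f a)).comp ha

section SymmetricTruncation

variable {f : ℝ → ℝ}

lemma monotoneOn_intervalIntegral_neg_self (hf : Integrable f) (hf_nonneg : 0 ≤ f) :
    MonotoneOn (fun L => ∫ x in -L..L, f x) (Ici 0) := by
  intro a ha b _ hab
  exact intervalIntegral.integral_mono_interval (neg_le_neg hab) (by linarith [mem_Ici.mp ha])
    hab (Eventually.of_forall hf_nonneg) hf.intervalIntegrable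

lemma intervalIntegral_neg_self_le_integral (hf : Integrable f) (hf_nonneg : 0 ≤ f) {L : ℝ}
    (hL : 0 ≤ L) : ∫ x in -L..L, f x ≤ ∫ x, f x := by
  rw [intervalIntegral.integral_of_le (by linarith)]
  exact setIntegral_le_integral hf (Eventually.of_forall hf_nonneg)

lemma tendsto_intervalIntegral_neg_self (hf : Integrable f) :
    Tendsto (fun L => ∫ x in -L..L, f x) atTop (𝓝 (∫ x, f x)) :=
  intervalIntegral_tendsto_integral hf tendsto_neg_atTop_atBot tendsto_id

end SymmetricTruncation

section Gaussian

variable {v : ℝ}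

lemma gaussPdf_eq_gaussianPDFReal (hv : 0 ≤ v) : gaussPdf v = gaussianPDFReal 0 v.toNNReal := by
  ext x
  simp [gaussPdf, gaussianPDFReal, hv]

lemma gaussPdf_pos (hv : 0 < v) (x : ℝ) : 0 < gaussPdf v x := by
  unfold gaussPdf
  positivity

@[fun_prop]
lemma continuous_gaussPdf (v : ℝ) : Continuous (gaussPdf v) := by
  unfold gaussPdf
  fun_prop

lemma integrable_gaussPdf (hv : 0 ≤ v) : Integrable (gaussPdf v) := by
  rw [gaussPdf_eq_gaussianPDFReal hv]
  exact integrable_gaussianPDFReal _ _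

lemma integral_gaussPdf (hv : 0 < v) : ∫ x, gaussPdf v x = 1 := by
  rw [gaussPdf_eq_gaussianPDFReal hv.le]
  exact integral_gaussianPDFReal_eq_one _ (by simpa using hv)

lemma log_gaussPdf (hv : 0 < v) (x : ℝ) :
    log (gaussPdf v x) = log (sqrt (2 * π * v))⁻¹ - x ^ 2 / (2 * v) := by
  rw [gaussPdf, log_mul (by positivity) (exp_pos _).ne', log_exp, neg_div, sub_eq_add_neg]

lemma integrable_sq_mul_gaussPdf (hv : 0 < v) : Integrable (fun x => x ^ 2 * gaussPdf v x) := by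
  have h := (integrable_rpow_mul_exp_neg_mul_sq (b := (2 * v)⁻¹) (by positivity)
    (s := 2) (by norm_num)).const_mul (sqrt (2 * π * v))⁻¹
  refine h.congr (Eventually.of_forall fun x => ?_)
  simp only [gaussPdf, rpow_two]
  ring_nf

lemma integrable_gaussPdf_mul_abs_log (hv : 0 < v) :
    Integrable (fun x => gaussPdf v x * |log (gaussPdf v x)|) := by
  set c := log (sqrt (2 * π * v))⁻¹
  refine (((integrable_gaussPdf hv.le).mul_const |c|).add
    ((integrable_sq_mul_gaussPdf hv).div_const (2 * v))).mono'
    ((continuous_gaussPdf v).mul ((continuous_gaussPdf v).log fun x =>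
      (gaussPdf_pos hv x).ne').abs).aestronglyMeasurable (Eventually.of_forall fun x => ?_)
  have hpos := gaussPdf_pos hv x
  rw [norm_mul, norm_of_nonneg hpos.le, norm_abs_eq_norm, norm_eq_abs, log_gaussPdf hv]
  calc gaussPdf v x * |c - x ^ 2 / (2 * v)| ≤ gaussPdf v x * (|c| + x ^ 2 / (2 * v)) := by
        gcongr
        exact (abs_sub _ _).trans_eq (by rw [abs_of_nonneg (by positivity : 0 ≤ x ^ 2 / (2 * v))])
    _ = _ := by simp only [Pi.add_apply]; ring

end Gaussian

section Convolution

variable {vX vZ : ℝ}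

lemma gaussPdf_sub_mul_gaussPdf (hvX : 0 < vX) (hvZ : 0 < vZ) (y x : ℝ) :
    gaussPdf vZ (y - x) * gaussPdf vX x =
      gaussPdf (vX + vZ) y * gaussPdf (vX * vZ / (vX + vZ)) (x - vX * y / (vX + vZ)) := by
  have hv : 0 < vX + vZ := by linarith
  unfold gaussPdf
  rw [mul_mul_mul_comm, ← mul_inv, ← sqrt_mul (by positivity), ← exp_add]
  conv_rhs => rw [mul_mul_mul_comm, ← mul_inv, ← sqrt_mul (by positivity), ← exp_add]
  congr 1
  · congr 2
    field_simp
  · congr 1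
    field_simp
    ring

lemma integrable_gaussPdf_sub_mul_gaussPdf (hvX : 0 < vX) (hvZ : 0 < vZ) (y : ℝ) :
    Integrable (fun x => gaussPdf vZ (y - x) * gaussPdf vX x) := by
  simp_rw [gaussPdf_sub_mul_gaussPdf hvX hvZ]
  exact ((integrable_gaussPdf (by positivity)).comp_sub_right _).const_mul _

lemma integral_gaussPdf_sub_mul_gaussPdf (hvX : 0 < vX) (hvZ : 0 < vZ) (y : ℝ) :
    ∫ x, gaussPdf vZ (y - x) * gaussPdf vX x = gaussPdf (vX + vZ) y := by
  simp_rw [gaussPdf_sub_mul_gaussPdf hvX hvZ]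
  rw [integral_const_mul, integral_sub_right_eq_self (gaussPdf _), integral_gaussPdf (by positivity),
    mul_one]

end Convolution

/-- Truncated Gaussian limits: with `K(L) = ∫_{-L}^L f_X`, `g_{Y_L}(y) = ∫_{-L}^L
f_Z(y−x) f_X(x) dx` and `f_Y(y) = ∫_ℝ f_Z(y−x) f_X(x) dx`, as `L → ∞` we have `K(L) → 1`,
`g_{Y_L}` increases pointwise to `f_Y`, and `∫ g_{Y_L} log g_{Y_L} → ∫ f_Y log f_Y`. -/
theorem truncated_gaussian_entropy_limit
    (vX vZ : ℝ) (hvX : 0 < vX) (hvZ : 0 < vZ) :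
    Tendsto (fun L : ℝ => ∫ x in (-L)..L, gaussPdf vX x) atTop (𝓝 1) ∧
    (∀ y : ℝ, MonotoneOn
      (fun L : ℝ => ∫ x in (-L)..L, gaussPdf vZ (y - x) * gaussPdf vX x)
      (Set.Ioi (0 : ℝ))) ∧
    (∀ y : ℝ, Tendsto
      (fun L : ℝ => ∫ x in (-L)..L, gaussPdf vZ (y - x) * gaussPdf vX x) atTop
      (𝓝 (∫ x : ℝ, gaussPdf vZ (y - x) * gaussPdf vX x))) ∧
    Tendsto (fun L : ℝ =>
        ∫ y : ℝ, (∫ x in (-L)..L, gaussPdf vZ (y - x) * gaussPdf vX x) *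
          Real.log (∫ x in (-L)..L, gaussPdf vZ (y - x) * gaussPdf vX x)) atTop
      (𝓝 (∫ y : ℝ, (∫ x : ℝ, gaussPdf vZ (y - x) * gaussPdf vX x) *
          Real.log (∫ x : ℝ, gaussPdf vZ (y - x) * gaussPdf vX x))) := by
  have hint := integrable_gaussPdf_sub_mul_gaussPdf hvX hvZ
  have hnonneg (y : ℝ) : 0 ≤ fun x => gaussPdf vZ (y - x) * gaussPdf vX x := fun x =>
    (mul_pos (gaussPdf_pos hvZ _) (gaussPdf_pos hvX x)).le
  have hlim (y : ℝ) := tendsto_intervalIntegral_neg_self (hint y)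
  have hK := tendsto_intervalIntegral_neg_self (integrable_gaussPdf hvX.le)
  rw [integral_gaussPdf hvX] at hK
  refine ⟨hK,
    fun y => (monotoneOn_intervalIntegral_neg_self (hint y) (hnonneg y)).mono Ioi_subset_Ici_self,
    hlim, ?_⟩
  have hcont (L : ℝ) :
      Continuous fun y => ∫ x in -L..L, gaussPdf vZ (y - x) * gaussPdf vX x :=
    intervalIntegral.continuous_parametric_intervalIntegral_of_continuous' (by fun_prop) _ _
  simp_rw [integral_gaussPdf_sub_mul_gaussPdf hvX hvZ] at hlim ⊢
  refine tendsto_integral_mul_log_of_le (.of_forall fun L => (hcont L).aestronglyMeasurable)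
    ?_ ?_ (integrable_gaussPdf (by positivity)) (integrable_gaussPdf_mul_abs_log (by positivity))
    (.of_forall hlim)
  · filter_upwards [eventually_ge_atTop 0] with L hL
    exact .of_forall fun y => intervalIntegral.integral_nonneg (by linarith) fun x _ => hnonneg y x
  · filter_upwards [eventually_ge_atTop 0] with L hL
    refine .of_forall fun y => ?_
    rw [← integral_gaussPdf_sub_mul_gaussPdf hvX hvZ]
    exact intervalIntegral_neg_self_le_integral (hint y) (hnonneg y) hL
end
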